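/- arXiv:1710.11202 — 3 statements merged into one kernel-verified Lean document; each statement's English description precedes it below -/
import Mathlib

section
/- Let γ > 0, n ∈ ℕ and y ≥ 1/γ. Then ∫_y^∞ xⁿ·exp(-γx) dx ≤ 3·n!·γ⁻¹·yⁿ·exp(-γy). -/
open Set MeasureTheory Real Filter

private lemma aux_integrable (γ : ℝ) (hγ : 0 < γ) (n : ℕ) (y : ℝ) (hy : 0 < y) :
    IntegrableOn (fun x : ℝ => x ^ n * Real.exp (-γ * x)) (Set.Ioi y) := by
  have h := integrableOn_rpow_mul_exp_neg_mul_rpow (p := 1) (s := (n : ℝ)) (b := γ)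
    (by linarith [Nat.cast_nonneg (α := ℝ) n]) zero_lt_one hγ
  have h2 : IntegrableOn (fun x : ℝ => x ^ (n : ℝ) * Real.exp (-γ * x ^ (1 : ℝ)))
      (Set.Ioi y) := h.mono_set (Set.Ioi_subset_Ioi hy.le)
  refine h2.congr_fun (fun x hx => ?_) measurableSet_Ioi
  dsimp only
  rw [Real.rpow_one, Real.rpow_natCast]

private lemma aux_tendsto (γ : ℝ) (hγ : 0 < γ) (n : ℕ) :
    Tendsto (fun x : ℝ => x ^ n * Real.exp (-γ * x)) atTop (nhds 0) := by
  have h1 : Tendsto (fun x : ℝ => γ * x) atTop atTop :=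
    Filter.tendsto_id.const_mul_atTop hγ
  have h2 := (tendsto_pow_mul_exp_neg_atTop_nhds_zero n).comp h1
  have h3 := h2.const_mul ((γ⁻¹) ^ n)
  rw [mul_zero] at h3
  refine h3.congr (fun x => ?_)
  simp only [Function.comp]
  rw [mul_pow, neg_mul]
  ring_nf
  rw [← mul_pow, mul_inv_cancel₀ hγ.ne', one_pow, one_mul]

private lemma aux_deriv_exp (γ x : ℝ) :
    HasDerivAt (fun x : ℝ => Real.exp (-γ * x)) (-γ * Real.exp (-γ * x)) x := by
  have := ((hasDerivAt_id x).const_mul (-γ)).exp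
  simpa [mul_comm] using this

private lemma aux_rec (γ y : ℝ) (hγ : 0 < γ) (hy : 0 < y) (n : ℕ) :
    ∫ x in Set.Ioi y, x ^ (n + 1) * Real.exp (-γ * x)
      = y ^ (n + 1) * Real.exp (-γ * y) / γ
        + ((n + 1) / γ) * ∫ x in Set.Ioi y, x ^ n * Real.exp (-γ * x) := by
  set f' : ℝ → ℝ := fun x => x ^ (n + 1) * Real.exp (-γ * x)
      - ((n + 1) / γ) * (x ^ n * Real.exp (-γ * x)) with hf'
  have hderiv : ∀ x ∈ Set.Ici y,
      HasDerivAt (fun x : ℝ => -(1 / γ) * (x ^ (n + 1) * Real.exp (-γ * x))) (f' x) x := by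
    intro x _
    have h1 : HasDerivAt (fun x : ℝ => x ^ (n + 1)) ((n + 1 : ℝ) * x ^ n) x := by
      simpa using (hasDerivAt_pow (n + 1) x)
    have h3 := (h1.mul (aux_deriv_exp γ x)).const_mul (-(1 / γ))
    refine h3.congr_deriv ?_
    simp only [hf']
    field_simp
    ring
  have hint1 := aux_integrable γ hγ (n + 1) y hy
  have hint0 := aux_integrable γ hγ n y hy
  have hint : IntegrableOn f' (Set.Ioi y) := hint1.sub (hint0.const_mul _)
  have htend : Tendsto (fun x : ℝ => -(1 / γ) * (x ^ (n + 1) * Real.exp (-γ * x)))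
      atTop (nhds 0) := by
    simpa using (aux_tendsto γ hγ (n + 1)).const_mul (-(1 / γ))
  have key := integral_Ioi_of_hasDerivAt_of_tendsto' hderiv hint htend
  rw [hf'] at key
  rw [MeasureTheory.integral_sub hint1 (hint0.const_mul _),
    MeasureTheory.integral_const_mul] at key
  field_simp at key ⊢
  linarith [key]

private lemma aux_base (γ y : ℝ) (hγ : 0 < γ) (hy : 0 < y) :
    ∫ x in Set.Ioi y, (x : ℝ) ^ 0 * Real.exp (-γ * x) = γ⁻¹ * Real.exp (-γ * y) := by
  have hderiv : ∀ x ∈ Set.Ici y,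
      HasDerivAt (fun x : ℝ => -(1 / γ) * Real.exp (-γ * x))
        ((x : ℝ) ^ 0 * Real.exp (-γ * x)) x := by
    intro x _
    have h3 := (aux_deriv_exp γ x).const_mul (-(1 / γ))
    refine h3.congr_deriv ?_
    field_simp
  have hint := aux_integrable γ hγ 0 y hy
  have htend : Tendsto (fun x : ℝ => -(1 / γ) * Real.exp (-γ * x)) atTop (nhds 0) := by
    have := (aux_tendsto γ hγ 0).const_mul (-(1 / γ))
    simpa using this
  have key := integral_Ioi_of_hasDerivAt_of_tendsto' hderiv hint htend
  rw [key]
  field_simp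
  ring

private noncomputable def auxc (n : ℕ) : ℝ := if n = 0 then 2 else 1

theorem stmt_3 (γ y : ℝ) (n : ℕ) (hγ : 0 < γ) (hy : 1 / γ ≤ y) :
    ∫ x in Set.Ioi y, x ^ n * Real.exp (-γ * x) ≤
      3 * (n.factorial : ℝ) * γ⁻¹ * y ^ n * Real.exp (-γ * y) := by
  have hy0 : 0 < y := lt_of_lt_of_le (by positivity) hy
  have hγy : 1 ≤ γ * y := by
    rw [div_le_iff₀ hγ] at hy; linarith [hy]
  have hc_nonneg : ∀ m : ℕ, 0 ≤ auxc m := by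
    intro m; unfold auxc; split <;> norm_num
  have hc_le : ∀ m : ℕ, auxc m ≤ 2 := by
    intro m; unfold auxc; split <;> norm_num
  suffices h : ∫ x in Set.Ioi y, x ^ n * Real.exp (-γ * x)
      ≤ (3 * (n.factorial : ℝ) - auxc n) * γ⁻¹ * y ^ n * Real.exp (-γ * y) by
    refine h.trans ?_
    have hA : (0:ℝ) < γ⁻¹ * y ^ n * Real.exp (-γ * y) := by positivity
    nlinarith [hc_nonneg n, hA]
  induction n with
  | zero =>
    rw [aux_base γ y hγ hy0]
    simp only [auxc, if_pos rfl, Nat.factorial_zero, Nat.cast_one, pow_zero]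
    have he : (0:ℝ) < Real.exp (-γ * y) := Real.exp_pos _
    rw [if_pos trivial]
    nlinarith [inv_pos.mpr hγ]
  | succ n ih =>
    rw [aux_rec γ y hγ hy0 n]
    set I := ∫ x in Set.Ioi y, x ^ n * Real.exp (-γ * x) with hIdef
    have hfac : ((n + 1).factorial : ℝ) = ((n : ℝ) + 1) * (n.factorial : ℝ) := by
      push_cast [Nat.factorial_succ]; ring
    have hfacge : (1:ℝ) ≤ (n.factorial : ℝ) := by
      exact_mod_cast Nat.one_le_iff_ne_zero.mpr n.factorial_ne_zero
    have hcoef_nonneg : (0:ℝ) ≤ 3 * (n.factorial : ℝ) - auxc n := by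
      have := hc_le n; linarith
    have hn1 : (0:ℝ) < (n:ℝ) + 1 := by positivity
    have hIub : (((n:ℝ) + 1) / γ) * I
        ≤ (((n:ℝ) + 1) / γ) * ((3 * (n.factorial : ℝ) - auxc n) * γ⁻¹ * y ^ n
            * Real.exp (-γ * y)) := by
      apply mul_le_mul_of_nonneg_left ih (by positivity)
    have hstep : (((n:ℝ) + 1) / γ) * ((3 * (n.factorial : ℝ) - auxc n) * γ⁻¹ * y ^ n
            * Real.exp (-γ * y))
        ≤ ((n:ℝ) + 1) * (3 * (n.factorial : ℝ) - auxc n) * γ⁻¹ * y ^ (n + 1)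
            * Real.exp (-γ * y) := by
      have hc : (0:ℝ) ≤ ((n:ℝ) + 1) * (3 * (n.factorial : ℝ) - auxc n) * y ^ n
          * Real.exp (-γ * y) := by positivity
      have h1 : (((n:ℝ) + 1) / γ) * ((3 * (n.factorial : ℝ) - auxc n) * γ⁻¹ * y ^ n
            * Real.exp (-γ * y))
          = (((n:ℝ) + 1) * (3 * (n.factorial : ℝ) - auxc n) * y ^ n * Real.exp (-γ * y))
            * (γ⁻¹ * γ⁻¹) := by
        field_simp
      have h2 : ((n:ℝ) + 1) * (3 * (n.factorial : ℝ) - auxc n) * γ⁻¹ * y ^ (n + 1)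
            * Real.exp (-γ * y)
          = (((n:ℝ) + 1) * (3 * (n.factorial : ℝ) - auxc n) * y ^ n * Real.exp (-γ * y))
            * (γ⁻¹ * y) := by
        rw [pow_succ]; ring
      rw [h1, h2]
      apply mul_le_mul_of_nonneg_left _ hc
      have hγi : (0:ℝ) < γ⁻¹ := inv_pos.mpr hγ
      have : γ⁻¹ * γ⁻¹ * (γ * y) = γ⁻¹ * y := by
        field_simp
      calc γ⁻¹ * γ⁻¹ = γ⁻¹ * γ⁻¹ * 1 := by ring
        _ ≤ γ⁻¹ * γ⁻¹ * (γ * y) := by nlinarith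
        _ = γ⁻¹ * y := this
    have hcn2 : 2 ≤ ((n:ℝ) + 1) * auxc n := by
      unfold auxc
      rcases Nat.eq_zero_or_pos n with hn | hn
      · simp [hn]
      · rw [if_neg hn.ne']
        have : (1:ℝ) ≤ (n:ℝ) := by exact_mod_cast hn
        linarith
    have hA : (0:ℝ) < γ⁻¹ * y ^ (n + 1) * Real.exp (-γ * y) := by positivity
    have hfirst : y ^ (n + 1) * Real.exp (-γ * y) / γ
        = γ⁻¹ * y ^ (n + 1) * Real.exp (-γ * y) := by ring
    have hcoef : 1 + ((n:ℝ) + 1) * (3 * (n.factorial : ℝ) - auxc n)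
        ≤ 3 * ((n + 1).factorial : ℝ) - auxc (n + 1) := by
      rw [hfac]
      have hcn1 : auxc (n + 1) = 1 := by unfold auxc; simp
      rw [hcn1]
      nlinarith [hcn2]
    calc y ^ (n + 1) * Real.exp (-γ * y) / γ + (((n:ℝ) + 1) / γ) * I
        ≤ γ⁻¹ * y ^ (n + 1) * Real.exp (-γ * y)
          + ((n:ℝ) + 1) * (3 * (n.factorial : ℝ) - auxc n) * γ⁻¹ * y ^ (n + 1)
            * Real.exp (-γ * y) := by
          rw [hfirst]; push_cast at hIub hstep ⊢; linarith
      _ ≤ (3 * ((n + 1).factorial : ℝ) - auxc (n + 1)) * γ⁻¹ * y ^ (n + 1)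
            * Real.exp (-γ * y) := by nlinarith [hA, hcoef]
end

section
/- Let g : ℝ → ℝ be continuous, odd, nondecreasing, nonnegative on ℝ₊, and satisfy liminf_{x→∞} g(x)/x^q > 0 for some q ≥ 1. Let G(x) = ∫₀ˣ g(y) dy. Then for every λ > 0 the measure on ℝ₊ with density y ↦ (1/2)·y^{-1/2}·exp(-2λ·G(√y)) with respect to Lebesgue measure is finite, i.e. ∫₀^∞ y^{-1/2}·exp(-2λ·G(√y)) dy < ∞. -/
open MeasureTheory

theorem stmt_8 (g : ℝ → ℝ) (q : ℝ) (hq : 1 ≤ q) (hcont : Continuous g)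
    (hodd : ∀ x, g (-x) = -g x) (hmono : Monotone g)
    (hnonneg : ∀ x ≥ (0 : ℝ), 0 ≤ g x)
    (hliminf : 0 < Filter.liminf (fun x => g x / x ^ q) Filter.atTop)
    (G : ℝ → ℝ) (hG : ∀ x, G x = ∫ y in (0 : ℝ)..x, g y) :
    ∀ l > (0 : ℝ), IntegrableOn
      (fun y : ℝ => y ^ (-(1 / 2 : ℝ)) * Real.exp (-2 * l * G (Real.sqrt y)))
      (Set.Ioi 0) := by
  intro l hl
  set f : ℝ → ℝ := fun y : ℝ => y ^ (-(1 / 2 : ℝ)) * Real.exp (-2 * l * G (Real.sqrt y))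
    with hf
  -- continuity of G
  have hGc : Continuous G := by
    have h : Continuous fun x => ∫ y in (0:ℝ)..x, g y :=
      intervalIntegral.continuous_primitive (fun a b => hcont.intervalIntegrable a b) 0
    have : G = fun x => ∫ y in (0:ℝ)..x, g y := funext hG
    rw [this]; exact h
  -- G nonneg on nonneg reals
  have hGnn : ∀ x ≥ (0:ℝ), 0 ≤ G x := by
    intro x hx
    rw [hG]
    exact intervalIntegral.integral_nonneg hx fun y hy => hnonneg y hy.1
  -- extract a positive eventual lower bound from the liminf
  have hS : ∃ ε > (0:ℝ), ∀ᶠ x in Filter.atTop, ε ≤ g x / x ^ q := by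
    by_contra hc
    push_neg at hc
    rw [Filter.liminf_eq] at hliminf
    have : sSup {a | ∀ᶠ x in Filter.atTop, a ≤ g x / x ^ q} ≤ 0 :=
      Real.sSup_le (fun a ha => le_of_not_gt fun h => hc a h (ha.mono fun x hx => not_lt.mpr hx)) le_rfl
    linarith
  obtain ⟨ε, hε, hev⟩ := hS
  obtain ⟨X, hX⟩ := Filter.eventually_atTop.mp hev
  set A : ℝ := max X 1 with hA
  have hA1 : (1:ℝ) ≤ A := le_max_right _ _
  have hA0 : (0:ℝ) ≤ A := le_trans zero_le_one hA1
  set m : ℝ := g A with hmdef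
  have hm : 0 < m := by
    have h1 : ε ≤ g A / A ^ q := hX A (le_max_left _ _)
    have h2 : (0:ℝ) < A ^ q := Real.rpow_pos_of_pos (lt_of_lt_of_le one_pos hA1) q
    have h3 : ε * A ^ q ≤ g A := (le_div_iff₀ h2).mp h1
    nlinarith
  -- lower bound for G
  have hGlow : ∀ x, A ≤ x → m * (x - A) ≤ G x := by
    intro x hx
    rw [hG]
    have hsplit : (∫ y in (0:ℝ)..A, g y) + (∫ y in A..x, g y) = ∫ y in (0:ℝ)..x, g y :=
      intervalIntegral.integral_add_adjacent_intervals (hcont.intervalIntegrable 0 A)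
        (hcont.intervalIntegrable A x)
    have h1 : (0:ℝ) ≤ ∫ y in (0:ℝ)..A, g y :=
      intervalIntegral.integral_nonneg hA0 fun y hy => hnonneg y hy.1
    have h2 : (∫ _ in A..x, m) ≤ ∫ y in A..x, g y := by
      apply intervalIntegral.integral_mono_on hx intervalIntegrable_const
        (hcont.intervalIntegrable A x)
      intro u hu
      exact hmono hu.1
    rw [intervalIntegral.integral_const, smul_eq_mul] at h2
    nlinarith
  set b : ℝ := 2 * l * m with hbdef
  have hb : 0 < b := by positivity
  have key : ∀ x ≥ (0:ℝ), -2 * l * G x ≤ b * A - b * x := by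
    intro x hx
    rcases le_or_gt A x with h | h
    · have h1 := hGlow x h
      nlinarith
    · have h1 := hGnn x hx
      nlinarith
  have hexp : ∀ x ≥ (0:ℝ), Real.exp (-2 * l * G x) ≤ Real.exp (b * A) * Real.exp (-(b * x)) := by
    intro x hx
    rw [← Real.exp_add]
    exact Real.exp_le_exp.mpr (by linarith [key x hx])
  -- measurability
  have hfm : AEStronglyMeasurable f (volume.restrict (Set.Ioi (0:ℝ))) := by
    apply ContinuousOn.aestronglyMeasurable _ measurableSet_Ioi
    apply ContinuousOn.mul
    · intro y hy
      exact (Real.continuousAt_rpow_const y _ (Or.inl (ne_of_gt hy))).continuousWithinAt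
    · exact (Real.continuous_exp.comp
        ((continuous_const.mul (hGc.comp Real.continuous_sqrt)))).continuousOn
  have hfnn : ∀ y : ℝ, 0 < y → 0 ≤ f y := by
    intro y hy
    exact mul_nonneg (Real.rpow_nonneg hy.le _) (Real.exp_pos _).le
  -- piece 1 : (0,1]
  have hI1 : IntegrableOn f (Set.Ioc (0:ℝ) 1) := by
    have hbnd : Integrable (fun y : ℝ => y ^ (-(1/2 : ℝ)))
        (volume.restrict (Set.Ioc (0:ℝ) 1)) :=
      (intervalIntegral.intervalIntegrable_rpow' (by norm_num)).1
    apply hbnd.mono'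
    · exact hfm.mono_measure (Measure.restrict_mono Set.Ioc_subset_Ioi_self le_rfl)
    · filter_upwards [ae_restrict_mem measurableSet_Ioc] with y hy
      rw [Real.norm_of_nonneg (hfnn y hy.1)]
      have h1 : Real.exp (-2 * l * G (Real.sqrt y)) ≤ 1 := by
        rw [← Real.exp_zero]
        apply Real.exp_le_exp.mpr
        have := hGnn (Real.sqrt y) (Real.sqrt_nonneg y)
        nlinarith
      calc f y ≤ y ^ (-(1/2:ℝ)) * 1 := by
            exact mul_le_mul_of_nonneg_left h1 (Real.rpow_nonneg hy.1.le _)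
        _ = y ^ (-(1/2:ℝ)) := mul_one _
  -- piece 2 : (1,∞)
  have hI2 : IntegrableOn f (Set.Ioi (1:ℝ)) := by
    set K : ℝ := Real.exp (b * A) * (256 / b ^ 4) with hK
    have hbnd : Integrable (fun y : ℝ => K * y ^ (-2 : ℝ))
        (volume.restrict (Set.Ioi (1:ℝ))) :=
      (integrableOn_Ioi_rpow_of_lt (by norm_num) one_pos).const_mul K
    apply hbnd.mono'
    · exact hfm.mono_measure (Measure.restrict_mono (Set.Ioi_subset_Ioi zero_le_one) le_rfl)
    · filter_upwards [ae_restrict_mem measurableSet_Ioi] with y hy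
      have hy0 : (0:ℝ) < y := lt_trans one_pos hy
      rw [Real.norm_of_nonneg (hfnn y hy0)]
      have h1 : y ^ (-(1/2:ℝ)) ≤ 1 :=
        Real.rpow_le_one_of_one_le_of_nonpos hy.le (by norm_num)
      have h2 : f y ≤ Real.exp (-2 * l * G (Real.sqrt y)) := by
        have := (Real.exp_pos (-2 * l * G (Real.sqrt y))).le
        calc f y ≤ 1 * Real.exp (-2 * l * G (Real.sqrt y)) :=
              mul_le_mul_of_nonneg_right h1 this
          _ = _ := one_mul _
      have h3 := hexp (Real.sqrt y) (Real.sqrt_nonneg y)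
      -- exp(-(b * √y)) ≤ 256 / b^4 * y⁻²
      set s : ℝ := b * Real.sqrt y / 4 with hs
      have hsy : 0 < Real.sqrt y := Real.sqrt_pos.mpr hy0
      have hspos : 0 < s := by positivity
      have hes : Real.exp (-s) ≤ s⁻¹ := by
        rw [Real.exp_neg]
        apply inv_anti₀ hspos
        linarith [Real.add_one_le_exp s]
      have h4 : Real.exp (-(b * Real.sqrt y)) = Real.exp (-s) ^ (4:ℕ) := by
        rw [← Real.exp_nat_mul]
        congr 1
        push_cast
        ring
      have h5 : Real.exp (-s) ^ (4:ℕ) ≤ (s⁻¹) ^ (4:ℕ) :=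
        pow_le_pow_left₀ (Real.exp_pos _).le hes 4
      have hsq : Real.sqrt y ^ 2 = y := Real.sq_sqrt hy0.le
      have hsq4 : Real.sqrt y ^ (4:ℕ) = y ^ 2 := by
        rw [show (4:ℕ) = 2*2 from rfl, pow_mul, hsq]
      have hs4 : s ^ (4:ℕ) = b ^ 4 * y ^ 2 / 256 := by
        rw [hs, div_pow, mul_pow, hsq4]; norm_num
      have h6 : (s⁻¹) ^ (4:ℕ) = 256 / (b ^ 4 * y ^ 2) := by
        rw [inv_pow, hs4]
        field_simp
      have h7 : y ^ (-2:ℝ) = (y ^ 2)⁻¹ := by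
        rw [show (-2:ℝ) = -(2:ℕ) by push_cast; ring, Real.rpow_neg hy0.le,
          Real.rpow_natCast]
      have h8 : Real.exp (-(b * Real.sqrt y)) ≤ 256 / b ^ 4 * y ^ (-2:ℝ) := by
        rw [h4, h7]
        calc Real.exp (-s) ^ (4:ℕ) ≤ (s⁻¹) ^ (4:ℕ) := h5
          _ = 256 / (b ^ 4 * y ^ 2) := h6
          _ = 256 / b ^ 4 * (y ^ 2)⁻¹ := by field_simp
      calc f y ≤ Real.exp (-2 * l * G (Real.sqrt y)) := h2
        _ ≤ Real.exp (b * A) * Real.exp (-(b * Real.sqrt y)) := h3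
        _ ≤ Real.exp (b * A) * (256 / b ^ 4 * y ^ (-2:ℝ)) :=
            mul_le_mul_of_nonneg_left h8 (Real.exp_pos _).le
        _ = K * y ^ (-2:ℝ) := by rw [hK]; ring
  have : Set.Ioc (0:ℝ) 1 ∪ Set.Ioi 1 = Set.Ioi (0:ℝ) := Set.Ioc_union_Ioi_eq_Ioi zero_le_one
  rw [← this]
  exact hI1.union hI2
end

section
/- Let g : ℝ → ℝ be continuous, nonnegative and nondecreasing on ℝ₊ with G(x) = ∫₀ˣ g(y) dy, G(x) ≥ C·x for x ≥ x̃ (for some C > 0, x̃ ≥ 0). Fix q' ≥ 0, p ≥ 1, η > 0, and choose c > 0 with G(c) ≤ η/(4p(1+η)). Then for every λ ≥ 0, ∫₀^∞ exp(-2λ·G(y)) dy ≥ c·exp(-λ·η/(4p(1+η))). Moreover there is a constant C̄ ≥ 1, independent of λ, such that (∫₀^∞ y^{q'}·exp(-2λ·G(y)) dy) / (∫₀^∞ exp(-2λ·G(y)) dy) ≤ C̄·(λ^{-(q'+1)} + exp(λ·η/(4p(1+η)))) for all λ > 0. -/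
open MeasureTheory

private lemma stmt_10_arith (m k LL e eA cc : ℝ) (hm : 0 ≤ m) (hk : 0 ≤ k)
    (hLL : 0 < LL) (he : 0 < e) (hcc : 0 < cc)
    (hkey : k * (LL * e) ≤ k * (eA * (LL + e))) :
    (m + k * LL) * e ≤ (cc + m + k * eA) * (LL + e) := by
  nlinarith [mul_nonneg hm hLL.le, mul_pos hcc hLL, mul_pos hcc he, mul_nonneg hm he.le]

set_option maxHeartbeats 1000000 in
theorem stmt_10 (g G : ℝ → ℝ) (hcont : Continuous g)
    (hnonneg : ∀ x ≥ (0 : ℝ), 0 ≤ g x) (hmono : MonotoneOn g (Set.Ici 0))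
    (hG : ∀ x, G x = ∫ y in (0 : ℝ)..x, g y)
    (C xt : ℝ) (hC : 0 < C) (hxt : 0 ≤ xt) (hlin : ∀ x ≥ xt, C * x ≤ G x)
    (q' p η c : ℝ) (hq' : 0 ≤ q') (hp : 1 ≤ p) (hη : 0 < η)
    (hc : 0 < c) (hGc : G c ≤ η / (4 * p * (1 + η))) :
    (∀ l ≥ (0 : ℝ),
      ENNReal.ofReal (c * Real.exp (-l * η / (4 * p * (1 + η)))) ≤
        ∫⁻ y in Set.Ioi (0 : ℝ), ENNReal.ofReal (Real.exp (-2 * l * G y))) ∧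
    ∃ Cb ≥ (1 : ℝ), ∀ l > (0 : ℝ),
      (∫ y in Set.Ioi (0 : ℝ), y ^ q' * Real.exp (-2 * l * G y)) /
        (∫ y in Set.Ioi (0 : ℝ), Real.exp (-2 * l * G y)) ≤
      Cb * (l ^ (-(q' + 1)) + Real.exp (l * η / (4 * p * (1 + η)))) := by
  have hp0 : (0:ℝ) < p := lt_of_lt_of_le one_pos hp
  set A : ℝ := η / (4 * p * (1 + η)) with hAdef
  have hA : 0 < A := div_pos hη (by positivity)
  -- basic facts about G
  have hGfun : G = fun u => ∫ y in (0:ℝ)..u, g y := funext hG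
  have hGderiv : ∀ x, HasDerivAt G (g x) x := by
    intro x
    rw [hGfun]
    exact intervalIntegral.integral_hasDerivAt_right (hcont.intervalIntegrable _ _)
      (hcont.stronglyMeasurableAtFilter _ _) hcont.continuousAt
  have hGcont : Continuous G := by
    rw [continuous_iff_continuousAt]; exact fun x => (hGderiv x).continuousAt
  have hG0 : G 0 = 0 := by rw [hG]; simp
  have hGmono : MonotoneOn G (Set.Ici 0) := by
    intro a ha b hb hab
    have h1 : IntervalIntegrable g volume 0 a := hcont.intervalIntegrable _ _
    have h2 : IntervalIntegrable g volume a b := hcont.intervalIntegrable _ _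
    have heq : G b = G a + ∫ y in a..b, g y := by
      rw [hG, hG, intervalIntegral.integral_add_adjacent_intervals h1 h2]
    have hnn : 0 ≤ ∫ y in a..b, g y :=
      intervalIntegral.integral_nonneg hab (fun u hu => hnonneg u (le_trans ha hu.1))
    linarith
  have hGnonneg : ∀ x ≥ (0:ℝ), 0 ≤ G x := by
    intro x hx
    have := hGmono (Set.mem_Ici.mpr le_rfl) (Set.mem_Ici.mpr hx) hx
    rw [hG0] at this; exact this
  have hGc0 : 0 ≤ G c := hGnonneg c hc.le
  -- convexity and chord bound
  have hconv : ConvexOn ℝ (Set.Ici 0) G := by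
    apply MonotoneOn.convexOn_of_deriv (convex_Ici 0) hGcont.continuousOn
      (fun x _ => (hGderiv x).differentiableAt.differentiableWithinAt)
    intro a ha b hb hab
    rw [interior_Ici] at ha hb
    rw [(hGderiv a).deriv, (hGderiv b).deriv]
    exact hmono (Set.mem_Ici.mpr (le_of_lt (Set.mem_Ioi.mp ha))) (Set.mem_Ici.mpr (le_of_lt (Set.mem_Ioi.mp hb))) hab
  have hchord : ∀ y ∈ Set.Icc (0:ℝ) c, G y ≤ y / c * G c := by
    intro y hy
    have ht0 : 0 ≤ y / c := div_nonneg hy.1 hc.le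
    have ht1 : y / c ≤ 1 := (div_le_one hc).mpr hy.2
    have h := hconv.2 (Set.mem_Ici.mpr le_rfl) (Set.mem_Ici.mpr hc.le)
      (by linarith : (0:ℝ) ≤ 1 - y/c) ht0 (by ring)
    have heq : (1 - y/c) • (0:ℝ) + (y/c) • c = y := by
      rw [smul_zero, zero_add, smul_eq_mul, div_mul_cancel₀ y hc.ne']
    rw [heq, hG0, smul_eq_mul, smul_eq_mul] at h
    linarith
  -- PART 1
  have part1 : ∀ l ≥ (0 : ℝ),
      ENNReal.ofReal (c * Real.exp (-l * η / (4 * p * (1 + η)))) ≤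
        ∫⁻ y in Set.Ioi (0 : ℝ), ENNReal.ofReal (Real.exp (-2 * l * G y)) := by
    intro l hl
    have hexpc : Continuous fun y => Real.exp (-2 * l * G y) :=
      Real.continuous_exp.comp ((continuous_const.mul hGcont))
    have hfi : IntegrableOn (fun y => Real.exp (-2 * l * G y)) (Set.Ioc 0 c) :=
      hexpc.integrableOn_Ioc
    set k : ℝ := 2 * l * G c / c with hkdef
    have hk0 : 0 ≤ k := by positivity
    have key : c * Real.exp (-l * η / (4 * p * (1 + η))) ≤
        ∫ y in Set.Ioc 0 c, Real.exp (-2 * l * G y) := by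
      have hexpt : -l * η / (4 * p * (1 + η)) = -(l * A) := by
        rw [hAdef]; ring
      have step1 : ∫ y in Set.Ioc 0 c, Real.exp (-k * y) ≤
          ∫ y in Set.Ioc 0 c, Real.exp (-2 * l * G y) := by
        apply setIntegral_mono_on
          ((Real.continuous_exp.comp (continuous_const.mul continuous_id)).integrableOn_Ioc)
          hfi measurableSet_Ioc
        intro y hy
        apply Real.exp_le_exp.2
        show -k * y ≤ -2 * l * G y
        have hch := hchord y ⟨hy.1.le, hy.2⟩
        have h2 : 2 * l * G y ≤ 2 * l * (y / c * G c) :=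
          mul_le_mul_of_nonneg_left hch (by positivity)
        have h3 : 2 * l * (y / c * G c) = k * y := by rw [hkdef]; field_simp
        linarith
      have step2 : c * Real.exp (-l * η / (4 * p * (1 + η))) ≤
          ∫ y in Set.Ioc 0 c, Real.exp (-k * y) := by
        rw [hexpt]
        rcases eq_or_lt_of_le (mul_nonneg hl hGc0) with h0 | h0
        · -- l * G c = 0, so k = 0 and integral is c
          have hlg : l * G c = 0 := h0.symm
          have hk : k = 0 := by
            rw [hkdef, show 2 * l * G c = 2 * (l * G c) by ring, hlg]; simp
          have : ∫ y in Set.Ioc 0 c, Real.exp (-k * y) = c := by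
            rw [hk]
            simp [Real.volume_Ioc, ENNReal.toReal_ofReal hc.le, hc.le]
          rw [this]
          nlinarith [Real.exp_le_one_iff.2 (by nlinarith : -(l*A) ≤ 0), Real.exp_pos (-(l*A))]
        · -- 0 < l * G c
          have hkpos : 0 < k := by
            rw [hkdef]; exact div_pos (by linarith) hc
          have hapos : 0 < 2 * l * G c := by linarith
          obtain ⟨a, hadef⟩ : ∃ a : ℝ, a = 2 * l * G c := ⟨_, rfl⟩
          rw [← hadef] at hapos
          have hkc : k * c = a := by rw [hkdef, hadef]; field_simp
          have hderiv : ∀ y ∈ Set.uIcc (0:ℝ) c,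
              HasDerivAt (fun x => -(Real.exp (-k*x)/k)) (Real.exp (-k*y)) y := by
            intro y _
            have h1 : HasDerivAt (fun x : ℝ => -k*x) (-k) y := by
              simpa using (hasDerivAt_id y).const_mul (-k)
            have h2 := (h1.exp.div_const k).neg
            rw [mul_neg, neg_div, neg_neg, mul_div_assoc, div_self hkpos.ne', mul_one] at h2
            exact h2
          have hii : IntervalIntegrable (fun y => Real.exp (-k*y)) volume 0 c :=
            (Real.continuous_exp.comp (continuous_const.mul continuous_id)).intervalIntegrable _ _
          have hint : ∫ y in Set.Ioc 0 c, Real.exp (-k * y)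
              = (1 - Real.exp (-a)) / k := by
            rw [← intervalIntegral.integral_of_le hc.le,
              intervalIntegral.integral_eq_sub_of_hasDerivAt hderiv hii]
            rw [show -k * c = -a by rw [← hkc]; ring]
            simp
            ring
          rw [hint, le_div_iff₀ hkpos]
          -- need: c * exp(-(l*A)) * k ≤ 1 - exp(-a)
          have hsinh : a / 2 ≤ Real.sinh (a / 2) := Real.self_le_sinh_iff.2 (by linarith)
          rw [Real.sinh_eq] at hsinh
          have hprod : Real.exp (a/2) * Real.exp (-(a/2)) = 1 := by
            rw [← Real.exp_add]; simp
          have hprod2 : Real.exp (-(a/2)) * Real.exp (-(a/2)) = Real.exp (-a) := by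
            rw [← Real.exp_add]; ring_nf
          have hee : Real.exp (-(l*A)) ≤ Real.exp (-(a/2)) := by
            apply Real.exp_le_exp.2
            have h6 : a / 2 = l * G c := by rw [hadef]; ring
            rw [h6]
            have := mul_le_mul_of_nonneg_left hGc hl
            linarith
          have hck : c * k = a := by rw [mul_comm]; exact hkc
          have hsinh2 : a ≤ Real.exp (a/2) - Real.exp (-(a/2)) := by linarith
          have h4 : a * Real.exp (-(a/2)) ≤
              (Real.exp (a/2) - Real.exp (-(a/2))) * Real.exp (-(a/2)) :=
            mul_le_mul_of_nonneg_right hsinh2 (Real.exp_pos _).le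
          have h5 : (Real.exp (a/2) - Real.exp (-(a/2))) * Real.exp (-(a/2))
              = 1 - Real.exp (-a) := by linear_combination hprod - hprod2
          have h7 : c * Real.exp (-(l*A)) * k = a * Real.exp (-(l*A)) := by
            rw [← hck]; ring
          have h8 : a * Real.exp (-(l*A)) ≤ a * Real.exp (-(a/2)) :=
            mul_le_mul_of_nonneg_left hee hapos.le
          rw [h7]
          linarith
      linarith
    calc ENNReal.ofReal (c * Real.exp (-l * η / (4 * p * (1 + η))))
        ≤ ENNReal.ofReal (∫ y in Set.Ioc 0 c, Real.exp (-2 * l * G y)) :=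
          ENNReal.ofReal_le_ofReal key
      _ = ∫⁻ y in Set.Ioc 0 c, ENNReal.ofReal (Real.exp (-2 * l * G y)) :=
          ofReal_integral_eq_lintegral_ofReal hfi
            (Filter.Eventually.of_forall (fun y => (Real.exp_pos _).le))
      _ ≤ ∫⁻ y in Set.Ioi (0:ℝ), ENNReal.ofReal (Real.exp (-2 * l * G y)) :=
          lintegral_mono_set Set.Ioc_subset_Ioi_self
  refine ⟨part1, ?_⟩
  -- PART 2
  have hQ : (0:ℝ) < q' + 1 := by linarith
  have hrpc : Continuous fun y : ℝ => y ^ q' := by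
    rw [continuous_iff_continuousAt]
    exact fun y => Real.continuousAt_rpow_const y q' (Or.inr hq')
  set M1 : ℝ := max 1 (xt ^ q') * xt with hM1def
  have hM1nn : 0 ≤ M1 := mul_nonneg (le_trans zero_le_one (le_max_left _ _)) hxt
  set K : ℝ := Real.Gamma (q' + 1) * (2 * C) ^ (-(q' + 1)) with hKdef
  have hK0 : 0 ≤ K :=
    mul_nonneg (Real.Gamma_pos_of_pos hQ).le (Real.rpow_nonneg (by linarith) _)
  refine ⟨1 + (M1 + K * Real.exp A) / c, ?_, ?_⟩
  · have h9 : 0 ≤ (M1 + K * Real.exp A) / c :=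
      div_nonneg (by positivity) hc.le
    linarith
  intro l hl
  have hexpc : Continuous fun y => Real.exp (-2 * l * G y) :=
    Real.continuous_exp.comp ((continuous_const.mul hGcont))
  have hhc : Continuous fun y : ℝ => y ^ q' * Real.exp (-2 * l * G y) := hrpc.mul hexpc
  have hCl : (0:ℝ) < 2 * l * C := by positivity
  have hE : l * η / (4 * p * (1 + η)) = l * A := by rw [hAdef]; ring
  set L : ℝ := l ^ (-(q' + 1)) with hLdef
  have hL0 : 0 < L := Real.rpow_pos_of_pos hl _
  -- integrability of the denominator integrand
  have hfbound : ∀ y ∈ Set.Ioi xt, Real.exp (-2 * l * G y) ≤ Real.exp (-(2 * l * C) * y) := by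
    intro y hy
    apply Real.exp_le_exp.2
    have := hlin y (le_of_lt hy)
    nlinarith
  have hfIoi : IntegrableOn (fun y => Real.exp (-2 * l * G y)) (Set.Ioi xt) := by
    apply Integrable.mono' (exp_neg_integrableOn_Ioi xt hCl)
      hexpc.aestronglyMeasurable.restrict
    filter_upwards [ae_restrict_mem measurableSet_Ioi] with y hy
    rw [Real.norm_eq_abs, abs_of_pos (Real.exp_pos _)]
    exact hfbound y hy
  have hfInt : IntegrableOn (fun y => Real.exp (-2 * l * G y)) (Set.Ioi 0) := by
    rw [← Set.Ioc_union_Ioi_eq_Ioi hxt]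
    exact hexpc.integrableOn_Ioc.union hfIoi
  -- dominating function for the numerator
  have hdom : IntegrableOn (fun y : ℝ => y ^ q' * Real.exp (-(2 * l * C) * y)) (Set.Ioi 0) := by
    have h10 := integrableOn_rpow_mul_exp_neg_mul_rpow (s := q') (p := 1) (b := 2 * l * C)
      (by linarith) one_pos hCl
    apply h10.congr_fun ?_ measurableSet_Ioi
    intro x hx
    show x ^ q' * Real.exp (-(2 * l * C) * x ^ (1:ℝ)) = x ^ q' * Real.exp (-(2 * l * C) * x)
    rw [Real.rpow_one]
  have hhIoi : IntegrableOn (fun y : ℝ => y ^ q' * Real.exp (-2 * l * G y)) (Set.Ioi xt) := by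
    apply Integrable.mono' (hdom.mono_set (Set.Ioi_subset_Ioi hxt))
      hhc.aestronglyMeasurable.restrict
    filter_upwards [ae_restrict_mem measurableSet_Ioi] with y hy
    have hy0 : (0:ℝ) ≤ y := le_trans hxt (le_of_lt hy)
    rw [Real.norm_eq_abs, abs_of_nonneg (mul_nonneg (Real.rpow_nonneg hy0 _) (Real.exp_pos _).le)]
    exact mul_le_mul_of_nonneg_left (hfbound y hy) (Real.rpow_nonneg hy0 _)
  have hhInt : IntegrableOn (fun y : ℝ => y ^ q' * Real.exp (-2 * l * G y)) (Set.Ioi 0) := by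
    rw [← Set.Ioc_union_Ioi_eq_Ioi hxt]
    exact hhc.integrableOn_Ioc.union hhIoi
  -- bound the numerator on (0, xt]
  have B1 : ∫ y in Set.Ioc 0 xt, y ^ q' * Real.exp (-2 * l * G y) ≤ M1 := by
    have hb : ∀ y ∈ Set.Ioc (0:ℝ) xt, ‖y ^ q' * Real.exp (-2 * l * G y)‖ ≤ max 1 (xt ^ q') := by
      intro y hy
      rw [Real.norm_eq_abs,
        abs_of_nonneg (mul_nonneg (Real.rpow_nonneg hy.1.le _) (Real.exp_pos _).le)]
      have h11 : y ^ q' ≤ xt ^ q' := Real.rpow_le_rpow hy.1.le hy.2 hq'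
      have h12 : Real.exp (-2 * l * G y) ≤ 1 := by
        rw [Real.exp_le_one_iff]
        have := hGnonneg y hy.1.le
        nlinarith
      calc y ^ q' * Real.exp (-2 * l * G y) ≤ xt ^ q' * 1 :=
            mul_le_mul h11 h12 (Real.exp_pos _).le (Real.rpow_nonneg hxt _)
        _ ≤ max 1 (xt ^ q') := by rw [mul_one]; exact le_max_right _ _
    have h13 := norm_setIntegral_le_of_norm_le_const (by
        rw [Real.volume_Ioc]; exact ENNReal.ofReal_lt_top) hb
    rw [Real.volume_real_Ioc_of_le hxt, sub_zero] at h13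
    calc ∫ y in Set.Ioc 0 xt, y ^ q' * Real.exp (-2 * l * G y)
        ≤ ‖∫ y in Set.Ioc 0 xt, y ^ q' * Real.exp (-2 * l * G y)‖ :=
          le_trans (le_abs_self _) (le_of_eq (Real.norm_eq_abs _).symm)
      _ ≤ max 1 (xt ^ q') * xt := h13
  -- bound the numerator on (xt, ∞)
  have B2 : ∫ y in Set.Ioi xt, y ^ q' * Real.exp (-2 * l * G y) ≤ K * L := by
    have s1 : ∫ y in Set.Ioi xt, y ^ q' * Real.exp (-2 * l * G y)
        ≤ ∫ y in Set.Ioi xt, y ^ q' * Real.exp (-(2 * l * C) * y) := by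
      apply setIntegral_mono_on hhIoi (hdom.mono_set (Set.Ioi_subset_Ioi hxt)) measurableSet_Ioi
      intro y hy
      exact mul_le_mul_of_nonneg_left (hfbound y hy)
        (Real.rpow_nonneg (le_trans hxt (le_of_lt hy)) _)
    have s2 : ∫ y in Set.Ioi xt, y ^ q' * Real.exp (-(2 * l * C) * y)
        ≤ ∫ y in Set.Ioi 0, y ^ q' * Real.exp (-(2 * l * C) * y) := by
      apply setIntegral_mono_set hdom
      · filter_upwards [ae_restrict_mem measurableSet_Ioi] with y hy
        exact mul_nonneg (Real.rpow_nonneg (le_of_lt hy) _) (Real.exp_pos _).le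
      · exact HasSubset.Subset.eventuallyLE (Set.Ioi_subset_Ioi hxt)
    have s3 : ∫ y in Set.Ioi 0, y ^ q' * Real.exp (-(2 * l * C) * y)
        = (1 / (2 * l * C)) ^ (q' + 1) * Real.Gamma (q' + 1) := by
      rw [← Real.integral_rpow_mul_exp_neg_mul_Ioi hQ hCl]
      apply setIntegral_congr_fun measurableSet_Ioi
      intro y hy
      show y ^ q' * Real.exp (-(2 * l * C) * y) = y ^ (q' + 1 - 1) * Real.exp (-(2 * l * C * y))
      rw [add_sub_cancel_right, neg_mul]
    have s4 : (1 / (2 * l * C)) ^ (q' + 1) * Real.Gamma (q' + 1) = K * L := by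
      rw [hKdef, hLdef]
      have h14 : (1:ℝ) / (2 * l * C) = ((2 * C) * l)⁻¹ := by
        rw [one_div]; ring_nf
      rw [h14, Real.inv_rpow (by positivity), ← Real.rpow_neg (by positivity),
        Real.mul_rpow (by positivity) hl.le]
      ring
    calc ∫ y in Set.Ioi xt, y ^ q' * Real.exp (-2 * l * G y)
        ≤ ∫ y in Set.Ioi 0, y ^ q' * Real.exp (-(2 * l * C) * y) := le_trans s1 s2
      _ = K * L := by rw [s3, s4]
  have hN : ∫ y in Set.Ioi (0:ℝ), y ^ q' * Real.exp (-2 * l * G y) ≤ M1 + K * L := by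
    rw [← Set.Ioc_union_Ioi_eq_Ioi hxt,
      setIntegral_union (Set.Ioc_disjoint_Ioi le_rfl) measurableSet_Ioi
        hhc.integrableOn_Ioc hhIoi]
    linarith
  -- lower bound for the denominator
  have hDlow : c * Real.exp (-(l * A)) ≤ ∫ y in Set.Ioi (0:ℝ), Real.exp (-2 * l * G y) := by
    have h := part1 l hl.le
    rw [← ofReal_integral_eq_lintegral_ofReal hfInt
      (Filter.Eventually.of_forall (fun y => (Real.exp_pos _).le))] at h
    have h15 := (ENNReal.ofReal_le_ofReal_iff
      (setIntegral_nonneg measurableSet_Ioi (fun y _ => (Real.exp_pos _).le))).1 h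
    have h16 : -l * η / (4 * p * (1 + η)) = -(l * A) := by rw [hAdef]; ring
    rw [h16] at h15
    exact h15
  have hDpos : 0 < ∫ y in Set.Ioi (0:ℝ), Real.exp (-2 * l * G y) :=
    lt_of_lt_of_le (by positivity) hDlow
  -- combine
  have hstep : (∫ y in Set.Ioi (0:ℝ), y ^ q' * Real.exp (-2 * l * G y)) /
      (∫ y in Set.Ioi (0:ℝ), Real.exp (-2 * l * G y))
      ≤ (M1 + K * L) / (c * Real.exp (-(l * A))) :=
    div_le_div₀ (by positivity) hN (by positivity) hDlow
  rw [hE]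
  refine le_trans hstep ?_
  have hlhs : (M1 + K * L) / (c * Real.exp (-(l * A)))
      = (M1 + K * L) * Real.exp (l * A) / c := by
    rw [Real.exp_neg]
    field_simp
  rw [hlhs, div_le_iff₀ hc]
  have hEpos : 0 < Real.exp (l * A) := Real.exp_pos _
  have key2 : L * Real.exp (l * A) ≤ Real.exp A * (L + Real.exp (l * A)) := by
    rcases le_total l 1 with h | h
    · have h17 : Real.exp (l * A) ≤ Real.exp A :=
        Real.exp_le_exp.2 (mul_le_of_le_one_left hA.le h)
      have h18 : L * Real.exp (l * A) ≤ Real.exp A * L := by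
        rw [mul_comm (Real.exp A) L]
        exact mul_le_mul_of_nonneg_left h17 hL0.le
      have h19 : Real.exp A * L ≤ Real.exp A * (L + Real.exp (l * A)) :=
        mul_le_mul_of_nonneg_left (by linarith) (Real.exp_pos A).le
      linarith
    · have hL1 : L ≤ 1 := Real.rpow_le_one_of_one_le_of_nonpos h (by linarith)
      have h1A : (1:ℝ) ≤ Real.exp A := Real.one_le_exp hA.le
      have h18 : L * Real.exp (l * A) ≤ Real.exp (l * A) :=
        mul_le_of_le_one_left hEpos.le hL1
      have h19 : Real.exp (l * A) ≤ Real.exp A * (L + Real.exp (l * A)) := by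
        have h20 : (1:ℝ) * Real.exp (l * A) ≤ Real.exp A * (L + Real.exp (l * A)) :=
          mul_le_mul h1A (by linarith) hEpos.le (by linarith)
        linarith [h20]
      linarith
  have hkey3 : K * (L * Real.exp (l * A)) ≤ K * (Real.exp A * (L + Real.exp (l * A))) :=
    mul_le_mul_of_nonneg_left key2 hK0
  have hCbc : (1 + (M1 + K * Real.exp A) / c) * (L + Real.exp (l * A)) * c
      = (c + M1 + K * Real.exp A) * (L + Real.exp (l * A)) := by
    field_simp
    ring_nf
  rw [hCbc]
  exact stmt_10_arith M1 K L (Real.exp (l * A)) (Real.exp A) c hM1nn hK0 hL0 hEpos hc hkey3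
end
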